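/- The formal integral preserves the filtration: if every monomial of h ∈ 𝒲 has degree ≥ k in the Wick grading, and φ ∈ 𝒲 has all terms of degree ≥ 3, then the formal integral ħ^{-n} ∫ h e^{(−|y|²+φ)/ħ} lies in ħ^{⌈k/2⌉}ℂ[[ħ]], i.e., its terms ħ^m all satisfy 2m ≥ k. -/

import Mathlib

open Finsupp MeasureTheory
open scoped Classical

noncomputable section

/-- Multi-indices for `n` variables. -/
abbrev MI (n : ℕ) := Fin n →₀ ℕ

/-- `|I| = i₁ + ⋯ + iₙ`. -/
def mdeg {n : ℕ} (I : MI n) : ℕ := I.sum fun _ v => v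

/-- `I! = i₁! ⋯ iₙ!`. -/
def mfact {n : ℕ} (I : MI n) : ℕ := I.prod fun _ v => v.factorial

/-- The Wick algebra `ℂ[[y, ȳ]][[ħ]]`, as coefficient functions:
`f (k, I, J)` is the coefficient of `ħ^k y^I ȳ^J`. -/
abbrev W (n : ℕ) := ℕ × MI n × MI n → ℂ

/-- The constant multi-index with all entries `k`. -/
def constMI (n k : ℕ) : MI n := Finsupp.equivFunOnFinite.symm fun _ => k

/-- The Wick product
`f ⋆ g = exp(−ħ Σᵢ ∂_{yᵢ} ∂_{ȳ'ᵢ}) (f(y,ȳ) g(y',ȳ'))|_{y = y'}`, written out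
coefficientwise (the inner sums are finite for each fixed coefficient). -/
def wick {n : ℕ} (f g : W n) : W n := fun x =>
  ∑ M ∈ Finset.Iic (constMI n x.1),
    if mdeg M ≤ x.1 then
      ∑ p ∈ Finset.HasAntidiagonal.antidiagonal (x.1 - mdeg M),
        ∑ i ∈ Finset.HasAntidiagonal.antidiagonal x.2.1,
          ∑ j ∈ Finset.HasAntidiagonal.antidiagonal x.2.2,
            ((-1 : ℂ) ^ mdeg M / (mfact M : ℂ)) *
              ((mfact (i.1 + M) : ℂ) / (mfact i.1 : ℂ)) *
              ((mfact (j.2 + M) : ℂ) / (mfact j.2 : ℂ)) *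
              f (p.1, i.1 + M, j.1) * g (p.2, i.2, j.2 + M)
    else 0

/-- Pointwise (classical, commutative) product of formal series. -/
def wmul {n : ℕ} (f g : W n) : W n := fun x =>
  ∑ p ∈ Finset.HasAntidiagonal.antidiagonal x.1, ∑ i ∈ Finset.HasAntidiagonal.antidiagonal x.2.1,
    ∑ j ∈ Finset.HasAntidiagonal.antidiagonal x.2.2,
      f (p.1, i.1, j.1) * g (p.2, i.2, j.2)

/-- The monomial `c · ħ^k y^I ȳ^J`. -/
def wmono {n : ℕ} (c : ℂ) (k : ℕ) (I J : MI n) : W n :=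
  fun x => if x = (k, I, J) then c else 0

/-- The unit `1` of the Wick algebra. -/
def wone (n : ℕ) : W n := wmono 1 0 0 0

/-- Pointwise powers `f^m`. -/
def wpow {n : ℕ} (f : W n) : ℕ → W n
  | 0 => wone n
  | m + 1 => wmul (wpow f m) f

/-- `f` has all of its monomials `ħ^k y^I ȳ^J` of degree `2k + |I| + |J| ≥ a`. -/
def wdegGE {n : ℕ} (f : W n) (a : ℕ) : Prop :=
  ∀ x, f x ≠ 0 → a ≤ 2 * x.1 + mdeg x.2.1 + mdeg x.2.2

/-- The extended Wick algebra: `ħ`-exponents may be negative integers. -/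
abbrev WE (n : ℕ) := ℤ × MI n × MI n → ℂ

/-- Embedding of the Wick algebra into its extension. -/
def embW {n : ℕ} (f : W n) : WE n := fun x =>
  if 0 ≤ x.1 then f (x.1.toNat, x.2) else 0

/-- Degree `2k + |I| + |J| ∈ ℤ` of a monomial in the extended Wick algebra. -/
def edeg {n : ℕ} (x : ℤ × MI n × MI n) : ℤ :=
  2 * x.1 + (mdeg x.2.1 : ℤ) + (mdeg x.2.2 : ℤ)

/-- Pointwise product on the extended Wick algebra. -/
def emul {n : ℕ} (f g : WE n) : WE n := fun x =>
  ∑' k : ℤ, ∑ i ∈ Finset.HasAntidiagonal.antidiagonal x.2.1, ∑ j ∈ Finset.HasAntidiagonal.antidiagonal x.2.2,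
    f (k, i.1, j.1) * g (x.1 - k, i.2, j.2)

/-- The Wick product on the extended Wick algebra. -/
def ewick {n : ℕ} (f g : WE n) : WE n := fun x =>
  ∑' q : ℤ × MI n, ∑ i ∈ Finset.HasAntidiagonal.antidiagonal x.2.1, ∑ j ∈ Finset.HasAntidiagonal.antidiagonal x.2.2,
    ((-1 : ℂ) ^ mdeg q.2 / (mfact q.2 : ℂ)) *
      ((mfact (i.1 + q.2) : ℂ) / (mfact i.1 : ℂ)) *
      ((mfact (j.2 + q.2) : ℂ) / (mfact j.2 : ℂ)) *
      f (q.1, i.1 + q.2, j.1) * g (x.1 - q.1 - (mdeg q.2 : ℤ), i.2, j.2 + q.2)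

/-- The unit of the extended Wick algebra. -/
def eone (n : ℕ) : WE n := fun x => if x = ((0 : ℤ), (0 : MI n), (0 : MI n)) then 1 else 0

/-- Wick (star) powers in the extended Wick algebra. -/
def epow {n : ℕ} (f : WE n) : ℕ → WE n
  | 0 => eone n
  | m + 1 => ewick (epow f m) f

/-- The classical exponential `exp(H/ħ) = Σₘ (1/m!) Hᵐ/ħᵐ`, an element of the
extended Wick algebra. -/
def expOverHbar {n : ℕ} (H : W n) : WE n := fun x =>
  ∑' m : ℕ, ((m.factorial : ℂ))⁻¹ * embW (wpow H m) (x.1 + (m : ℤ), x.2)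

/-- The star-exponential `exp^⋆(X) = Σₘ X^{⋆m}/m!`. -/
def starExp {n : ℕ} (X : WE n) : WE n := fun x =>
  ∑' m : ℕ, ((m.factorial : ℂ))⁻¹ * epow X m x

/-- The Fock space `ℂ[[y]][[ħ]]`: `s (k, I)` is the coefficient of `ħ^k y^I`. -/
abbrev F (n : ℕ) := ℕ × MI n → ℂ

/-- The extended Fock space (negative powers of `ħ` allowed). -/
abbrev FE (n : ℕ) := ℤ × MI n → ℂ

/-- Embedding of the Fock space into its extension. -/
def embF {n : ℕ} (s : F n) : FE n := fun x =>
  if 0 ≤ x.1 then s (x.1.toNat, x.2) else 0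

/-- The Bargmann-Fock action on the Fock space: the normally ordered monomial
`ħ^m y^I ȳ^J` acts as `(ħ ∂/∂y)^J ∘ m_{y^I}`, extended `ℂ[[ħ]]`-linearly. -/
def bf {n : ℕ} (f : W n) (s : F n) : F n := fun x =>
  ∑ m ∈ Finset.range (x.1 + 1), ∑ J ∈ Finset.Iic (constMI n x.1),
    if m + mdeg J ≤ x.1 then
      ∑ I ∈ Finset.Iic (x.2 + J),
        f (m, I, J) * ((mfact (x.2 + J) : ℂ) / (mfact x.2 : ℂ)) *
          s (x.1 - m - mdeg J, x.2 + J - I)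
    else 0

/-- The Bargmann-Fock action of extended Wick elements on the extended Fock space. -/
def ebf {n : ℕ} (E : WE n) (s : FE n) : FE n := fun x =>
  ∑' q : ℤ × MI n, ∑ I ∈ Finset.Iic (x.2 + q.2),
    E (q.1, I, q.2) * ((mfact (x.2 + q.2) : ℂ) / (mfact x.2 : ℂ)) *
      s (x.1 - q.1 - (mdeg q.2 : ℤ), x.2 + q.2 - I)

/-- Complex conjugation on the Wick algebra: swaps `y^I ↔ ȳ^I` and conjugates
coefficients. -/
def conjW {n : ℕ} (f : W n) : W n := fun x => (starRingEnd ℂ) (f (x.1, x.2.2, x.2.1))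

/-- The formal (oscillatory Gaussian) integral `ħ^{-n} ∫ h e^{(−|y|²+φ)/ħ}` as a
formal Laurent series in `ħ` (coefficient of `ħ^d`), defined by expanding
`e^{φ/ħ}` and applying the Wick contraction rule
`ħ^{-n} ∫ y^I ȳ^J e^{−|y|²/ħ} = δ_{IJ} I! ħ^{|I|}`. -/
def FI {n : ℕ} (φ h : W n) : ℤ → ℂ := fun d =>
  ∑' q : ℕ × MI n,
    if 0 ≤ d + (q.1 : ℤ) - (mdeg q.2 : ℤ) then
      ((q.1.factorial : ℂ))⁻¹ * (mfact q.2 : ℂ) *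
        wmul (wpow φ q.1) h ((d + (q.1 : ℤ) - (mdeg q.2 : ℤ)).toNat, q.2, q.2)
    else 0

/-- The formal inner product `⟨f, g⟩ = ħ^{-n} ∫ f ḡ e^{(−|y|²+φ)/ħ}`. -/
def ip {n : ℕ} (φ f g : W n) : ℤ → ℂ := FI φ (wmul f (conjW g))


lemma mdeg_add {n : ℕ} (I J : MI n) : mdeg (I + J) = mdeg I + mdeg J :=
  Finsupp.sum_add_index' (fun _ => rfl) (fun _ _ _ => rfl)

lemma wdegGE_wmul {n : ℕ} {f g : W n} {a b : ℕ} (hf : wdegGE f a) (hg : wdegGE g b) :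
    wdegGE (wmul f g) (a + b) := by
  rintro ⟨m, I, J⟩ hx
  obtain ⟨p, hp, hp0⟩ := Finset.exists_ne_zero_of_sum_ne_zero hx
  obtain ⟨i, hi, hi0⟩ := Finset.exists_ne_zero_of_sum_ne_zero hp0
  obtain ⟨j, hj, hj0⟩ := Finset.exists_ne_zero_of_sum_ne_zero hi0
  have h1 := hf _ (left_ne_zero_of_mul hj0)
  have h2 := hg _ (right_ne_zero_of_mul hj0)
  simp only [Finset.HasAntidiagonal.mem_antidiagonal] at hp hi hj
  simp only at h1 h2
  rw [show m = p.1 + p.2 from hp.symm, show I = i.1 + i.2 from hi.symm,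
    show J = j.1 + j.2 from hj.symm, mdeg_add, mdeg_add]
  omega

lemma wdegGE_wpow {n : ℕ} {f : W n} (hf : wdegGE f 3) (m : ℕ) :
    wdegGE (wpow f m) (3 * m) := by
  induction m with
  | zero => intro x _; exact Nat.zero_le _
  | succ m ih =>
    have := wdegGE_wmul ih hf
    simpa [Nat.mul_succ, wpow] using this

/-- The formal integral preserves the filtration: if every
monomial of `h` has degree `≥ k` in the Wick grading and `φ` has all terms of
degree `≥ 3`, then `ħ^{-n} ∫ h e^{(−|y|²+φ)/ħ}` lies in `ħ^{⌈k/2⌉} ℂ[[ħ]]`,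
i.e. all of its terms `ħ^d` satisfy `2d ≥ k`. -/
theorem formal_integral_preserves_filtration (n : ℕ) (φ h : W n)
    (hφ : wdegGE φ 3) (k : ℕ) (hh : wdegGE h k) :
    ∀ d : ℤ, FI φ h d ≠ 0 → (k : ℤ) ≤ 2 * d := by
  intro d hd
  by_contra hlt
  push_neg at hlt
  apply hd
  have key : ∀ q : ℕ × MI n, (if 0 ≤ d + (q.1 : ℤ) - (mdeg q.2 : ℤ) then
      ((q.1.factorial : ℂ))⁻¹ * (mfact q.2 : ℂ) *
        wmul (wpow φ q.1) h ((d + (q.1 : ℤ) - (mdeg q.2 : ℤ)).toNat, q.2, q.2)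
    else 0) = 0 := by
    rintro ⟨m, M⟩
    simp only
    split_ifs with hpos
    · rw [mul_eq_zero]; right
      by_contra hne
      have h1 := wdegGE_wmul (wdegGE_wpow hφ m) hh _ hne
      simp only at h1
      have h2 : ((d + (m : ℤ) - (mdeg M : ℤ)).toNat : ℤ) = d + m - mdeg M :=
        Int.toNat_of_nonneg hpos
      omega
    · rfl
  exact (tsum_congr key).trans tsum_zero

end
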